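/- arXiv:2106.11121 — 2 statements merged into one kernel-verified Lean document; each statement's English description precedes it below -/
import Mathlib

section
/- Let G be a graph on n vertices. If for an integer k every nonnegative weight vector w ∈ ℝ₊^V satisfies ϑ_k(G;w) ≥ wᵀ𝟙, then h(G) ≤ k, where h(G) is the smallest integer m ≥ 1 such that λ₁(Z) + Σ_{i=1}^{m−1} λ_{n+1−i}(Z) ≤ 0 for all symmetric Z supported on the edges of G. -/
/-- The `i`-th largest eigenvalue (0-indexed) of a real symmetric matrix; `0` if out of
range or not symmetric. -/
noncomputable def eigDesc {n : ℕ} (A : Matrix (Fin n) (Fin n) ℝ) : ℕ → ℝ :=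
  fun i => if h : i < n ∧ A.IsHermitian then
    h.2.eigenvalues (Tuple.sort (fun j => -h.2.eigenvalues j) ⟨i, h.1⟩) else 0

/-- `h(G)`: the smallest integer `m ≥ 1` such that for every symmetric matrix `Z`
supported on the edges of `G`, `λ₁(Z) + λₙ(Z) + ⋯ + λₙ₋ₘ₊₂(Z) ≤ 0`. -/
noncomputable def hParam {n : ℕ} (G : SimpleGraph (Fin n)) : ℕ :=
  sInf {m : ℕ | 1 ≤ m ∧ ∀ Z : Matrix (Fin n) (Fin n) ℝ, Z.IsSymm →
    (∀ i j, ¬ G.Adj i j → Z i j = 0) →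
    eigDesc Z 0 + ∑ i ∈ Finset.range (m - 1), eigDesc Z (n - 1 - i) ≤ 0}

/-- The rank-one matrix `√w √wᵀ`. -/
noncomputable def sqrtRank1 {n : ℕ} (w : Fin n → ℝ) : Matrix (Fin n) (Fin n) ℝ :=
  Matrix.of fun i j => Real.sqrt (w i) * Real.sqrt (w j)

/-- The weighted Narasimhan–Manber parameter `ϑ_k(G; w)` in its eigenvalue-sum
(primal) form: the infimum of the sum of the `k` largest eigenvalues of
`√w √wᵀ + Y` over symmetric `Y` supported on the edges of `G`. -/
noncomputable def thetaInf {n : ℕ} (G : SimpleGraph (Fin n)) (w : Fin n → ℝ) (k : ℕ) : ℝ :=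
  sInf {r : ℝ | ∃ Y : Matrix (Fin n) (Fin n) ℝ, Y.IsSymm ∧
    (∀ i j, ¬ G.Adj i j → Y i j = 0) ∧
    r = ∑ i ∈ Finset.range k, eigDesc (sqrtRank1 w + Y) i}

/-!
Suppose a symmetric `Z` supported on the edges violates `λ₁(Z) + λₙ(Z) + ⋯ + λₙ₋ₖ₊₂(Z) ≤ 0`.
Let `u` be a unit eigenvector for `λ₁(Z)`, `D = diag(sign u)`, `c > ∑ |λᵢ(Z)|` and `w = c u²`.
Then `√w = √c D u`, so with `Y = -DZD` (supported on the edges of `G`) we get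
`√w √wᵀ + Y = D (c u uᵀ - Z) D`, whose eigenvalues are `c - λ₁(Z), -λ₂(Z), …, -λₙ(Z)`.
Any `k` of these sum to less than `c = ∑ wᵢ`: if `c - λ₁(Z)` is among them, the other `k - 1`
are at most minus the `k - 1` smallest eigenvalues of `Z`; otherwise because `c > ∑ |λᵢ(Z)|`.
Hence `ϑ_k(G; w) < ∑ wᵢ`. For `k > n` the bound `h(G) ≤ n` holds since at `m = n` the sum
is `tr Z = 0`.
-/

open Matrix Finset

theorem exists_equiv_comp_eq_of_map_univ_eq {α β γ : Type*} [Fintype α] [Fintype β]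
    [DecidableEq γ] {f : α → γ} {g : β → γ}
    (h : Multiset.map f univ.val = Multiset.map g univ.val) : ∃ e : α ≃ β, g ∘ e = f := by
  classical
  have hfiber : ∀ c, Fintype.card {a // f a = c} = Fintype.card {b // g b = c} := fun c => by
    simpa [Multiset.count_map, Fintype.card_subtype, Finset.card, eq_comm] using
      congrArg (Multiset.count c) h
  exact ⟨Equiv.ofFiberEquiv fun c => Fintype.equivOfCardEq (hfiber c),
    funext (Equiv.ofFiberEquiv_map _)⟩

theorem Finset.sum_le_sum_of_card_eq_of_forall_sdiff_le {ι M : Type*} [DecidableEq ι]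
    [AddCommMonoid M] [LinearOrder M] [IsOrderedAddMonoid M] {P Q : Finset ι} {f : ι → M}
    (hcard : #Q = #P) (h : ∀ y ∈ Q \ P, ∀ x ∈ P \ Q, f y ≤ f x) :
    ∑ y ∈ Q, f y ≤ ∑ x ∈ P, f x := by
  rw [← sum_inter_add_sum_sdiff Q P, ← sum_inter_add_sum_sdiff P Q, inter_comm]
  gcongr 1
  have hsdiff : #(Q \ P) = #(P \ Q) := card_sdiff_comm hcard
  rcases (Q \ P).eq_empty_or_nonempty with hQP | hQP
  · rw [hQP, card_empty, eq_comm, card_eq_zero] at hsdiff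
    rw [hQP, hsdiff]
  · obtain ⟨y, hy, hmax⟩ := exists_max_image (Q \ P) f hQP
    calc ∑ y ∈ Q \ P, f y ≤ #(Q \ P) • f y := sum_le_card_nsmul _ _ _ hmax
      _ = #(P \ Q) • f y := by rw [hsdiff]
      _ ≤ ∑ x ∈ P \ Q, f x := card_nsmul_le_sum _ _ _ (h y hy)

theorem Finset.sum_range_eq_add_sum_range_reflect {M : Type*} [AddCommMonoid M] (f : ℕ → M)
    {n : ℕ} (hn : 0 < n) :
    ∑ i ∈ range n, f i = f 0 + ∑ i ∈ range (n - 1), f (n - 1 - i) := by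
  obtain ⟨m, rfl⟩ := Nat.exists_eq_add_one_of_ne_zero hn.ne'
  rw [sum_range_succ', add_comm, Nat.add_sub_cancel, ← sum_range_reflect (fun i => f (i + 1))]
  congr 1
  exact sum_congr rfl fun i hi => by rw [mem_range] at hi; congr 1; omega

theorem Matrix.IsSymm.isHermitian {ι α : Type*} [Star α] [TrivialStar α] {A : Matrix ι ι α}
    (hA : A.IsSymm) : A.IsHermitian := by
  rwa [IsHermitian, conjTranspose_eq_transpose_of_trivial]

theorem Matrix.IsHermitian.exists_orthogonal_eq_mul_diagonal_mul_transpose {ι : Type*}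
    [Fintype ι] [DecidableEq ι] {Z : Matrix ι ι ℝ} (hZ : Z.IsHermitian) :
    ∃ U : Matrix ι ι ℝ, Uᵀ * U = 1 ∧ Z = U * diagonal hZ.eigenvalues * Uᵀ := by
  refine ⟨hZ.eigenvectorUnitary, ?_, ?_⟩
  · simpa [star_eq_conjTranspose] using mem_unitaryGroup_iff'.mp hZ.eigenvectorUnitary.2
  · conv_lhs => rw [hZ.spectral_theorem]
    simp [Unitary.conjStarAlgAut_apply, star_eq_conjTranspose]

open Polynomial in
theorem Matrix.IsHermitian.exists_perm_eigenvalues_eq {ι : Type*} [Fintype ι] [DecidableEq ι]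
    {A V W : Matrix ι ι ℝ} (hA : A.IsHermitian) {d : ι → ℝ} (hWV : W * V = 1)
    (hA_eq : A = V * diagonal d * W) : ∃ e : Equiv.Perm ι, d ∘ e = hA.eigenvalues := by
  have hchar : A.charpoly = (diagonal d).charpoly := by
    rw [hA_eq, charpoly_mul_comm, ← mul_assoc, hWV, one_mul]
  rw [hA.charpoly_eq, charpoly_diagonal] at hchar
  apply exists_equiv_comp_eq_of_map_univ_eq
  have hroots : ∀ f : ι → ℝ, (∏ i, (X - C (f i))).roots = univ.val.map f := fun f => by
    simpa using roots_multiset_prod_X_sub_C (univ.val.map f)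
  simpa [hroots] using congrArg roots hchar

section eigDesc

variable {n : ℕ} {A : Matrix (Fin n) (Fin n) ℝ}

theorem eigDesc_of_lt (hA : A.IsHermitian) {i : ℕ} (hi : i < n) :
    eigDesc A i = hA.eigenvalues (Tuple.sort (fun j => -hA.eigenvalues j) ⟨i, hi⟩) := by
  rw [eigDesc, dif_pos ⟨hi, hA⟩]

theorem eigDesc_sort_symm (hA : A.IsHermitian) (x : Fin n) :
    eigDesc A ((Tuple.sort fun j => -hA.eigenvalues j).symm x : ℕ) = hA.eigenvalues x := by
  rw [eigDesc_of_lt hA (Fin.is_lt _), Fin.eta, Equiv.apply_symm_apply]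

theorem eigDesc_le_eigDesc (hA : A.IsHermitian) {i j : ℕ} (hij : i ≤ j) (hj : j < n) :
    eigDesc A j ≤ eigDesc A i := by
  rw [eigDesc_of_lt hA hj, eigDesc_of_lt hA (hij.trans_lt hj)]
  simpa using Tuple.monotone_sort (fun j => -hA.eigenvalues j)
    (show (⟨i, _⟩ : Fin n) ≤ ⟨j, hj⟩ from hij)

theorem exists_card_eq_sum_range_eigDesc_eq (hA : A.IsHermitian) {k : ℕ} (hk : k ≤ n) :
    ∃ T : Finset (Fin n), #T = k ∧
      ∑ i ∈ range k, eigDesc A i = ∑ x ∈ T, hA.eigenvalues x := by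
  refine ⟨univ.map ((Fin.castLEEmb hk).trans (Tuple.sort fun j => -hA.eigenvalues j).toEmbedding),
    by simp, ?_⟩
  rw [sum_map, ← Fin.sum_univ_eq_sum_range]
  exact sum_congr rfl fun i _ => eigDesc_of_lt hA _

theorem sum_range_eigDesc_eq_trace (hA : A.IsHermitian) :
    ∑ i ∈ range n, eigDesc A i = A.trace := by
  rw [hA.trace_eq_sum_eigenvalues, ← Fin.sum_univ_eq_sum_range]
  simp only [RCLike.ofReal_real_eq_id, id]
  rw [← Equiv.sum_comp (Tuple.sort fun j => -hA.eigenvalues j) hA.eigenvalues]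
  exact sum_congr rfl fun i _ => eigDesc_of_lt hA _

theorem sum_range_eigDesc_rev_le (hA : A.IsHermitian) (P : Finset (Fin n)) :
    ∑ i ∈ range #P, eigDesc A (n - 1 - i) ≤ ∑ x ∈ P, hA.eigenvalues x := by
  set ι : Fin n ↪ ℕ :=
    (Tuple.sort fun j => -hA.eigenvalues j).symm.toEmbedding.trans Fin.valEmbedding
  have hP : ∑ x ∈ P, hA.eigenvalues x = ∑ j ∈ P.map ι, eigDesc A j := by
    rw [sum_map]
    exact sum_congr rfl fun x _ => (eigDesc_sort_symm hA x).symm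
  have hm : #P ≤ n := by simpa using card_le_univ P
  have hrev :
      ∑ i ∈ range #P, eigDesc A (n - 1 - i) = ∑ j ∈ Ico (n - #P) n, eigDesc A j := by
    rw [sum_Ico_eq_sum_range, ← sum_range_reflect, Nat.sub_sub_self hm]
    exact sum_congr rfl fun i hi => by rw [mem_range] at hi; congr 1; omega
  rw [hrev, hP]
  refine sum_le_sum_of_card_eq_of_forall_sdiff_le (by simp [Nat.sub_sub_self hm])
    fun y hy x hx => ?_
  simp only [mem_sdiff, mem_Ico, mem_map] at hx hy
  obtain ⟨⟨x', -, rfl⟩, hx⟩ := hx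
  have : ι x' < n := (Tuple.sort fun j => -hA.eigenvalues j).symm x' |>.is_lt
  exact eigDesc_le_eigDesc hA (by omega) hy.1.2

theorem exists_card_eq_sum_range_eigDesc_eq_of_eq_mul_diagonal_mul
    {V W : Matrix (Fin n) (Fin n) ℝ} (hA : A.IsHermitian) {d : Fin n → ℝ} (hWV : W * V = 1)
    (hA_eq : A = V * diagonal d * W) {k : ℕ} (hk : k ≤ n) :
    ∃ T : Finset (Fin n), #T = k ∧ ∑ i ∈ range k, eigDesc A i = ∑ x ∈ T, d x := by
  obtain ⟨e, he⟩ := hA.exists_perm_eigenvalues_eq hWV hA_eq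
  obtain ⟨T, hT, hsum⟩ := exists_card_eq_sum_range_eigDesc_eq hA hk
  refine ⟨T.map e.toEmbedding, by simp [hT], ?_⟩
  rw [hsum, sum_map, ← he]
  rfl

end eigDesc

noncomputable def signVec {ι : Type*} (u : ι → ℝ) : ι → ℝ :=
  fun i => if 0 ≤ u i then 1 else -1

theorem signVec_mul_self {ι : Type*} (u : ι → ℝ) (i : ι) :
    signVec u i * signVec u i = 1 := by
  unfold signVec; split_ifs <;> norm_num

theorem signVec_mul {ι : Type*} (u : ι → ℝ) (i : ι) : signVec u i * u i = |u i| := by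
  unfold signVec; split_ifs with h
  · rw [one_mul, abs_of_nonneg h]
  · rw [neg_one_mul, abs_of_neg (not_le.mp h)]

theorem sqrtRank1_sub_eq {n : ℕ} {U : Matrix (Fin n) (Fin n) ℝ} {μ : Fin n → ℝ} (t : Fin n)
    {c : ℝ} (hc : 0 ≤ c) :
    sqrtRank1 (fun i => c * U i t ^ 2)
      - diagonal (signVec (U · t)) * (U * diagonal μ * Uᵀ) * diagonal (signVec (U · t))
      = diagonal (signVec (U · t)) * U * diagonal (Pi.single t c - μ)
        * (diagonal (signVec (U · t)) * U)ᵀ := by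
  have hrank1 : sqrtRank1 (fun i => c * U i t ^ 2) = diagonal (signVec (U · t))
      * (U * diagonal (Pi.single t c) * Uᵀ) * diagonal (signVec (U · t)) := by
    ext i j
    rw [mul_diagonal, diagonal_mul, mul_apply]
    simp only [mul_diagonal, transpose_apply, Pi.single_apply, mul_ite, ite_mul, mul_zero, zero_mul,
      sum_ite_eq', mem_univ, if_true]
    rw [sqrtRank1, of_apply, Real.sqrt_mul hc, Real.sqrt_mul hc, Real.sqrt_sq_eq_abs,
      Real.sqrt_sq_eq_abs, ← signVec_mul (U · t), ← signVec_mul (U · t)]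
    linear_combination
      (signVec (U · t) i * U i t * (signVec (U · t) j * U j t)) * Real.mul_self_sqrt hc
  have hsub : diagonal (Pi.single t c - μ) = diagonal (Pi.single t c) - diagonal μ :=
    (diagonal_sub _ _).symm
  rw [hrank1, transpose_mul, diagonal_transpose, hsub]
  simp only [mul_sub, sub_mul, mul_assoc]

theorem hParam_le_max_one {n : ℕ} (G : SimpleGraph (Fin n)) : hParam G ≤ max n 1 := by
  refine Nat.sInf_le ⟨le_max_right _ _, fun Z hZ hsupp => ?_⟩
  rcases Nat.eq_zero_or_pos n with rfl | hn
  · simp [eigDesc]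
  · have htrace : Z.trace = 0 := sum_eq_zero fun i _ => hsupp i i (G.irrefl)
    rw [max_eq_left hn, ← sum_range_eq_add_sum_range_reflect _ hn,
      sum_range_eigDesc_eq_trace hZ.isHermitian, htrace]

/-- The `max` accounts for the junk value `sInf s = 0` of a set of reals not bounded below. -/
theorem thetaInf_le_max {n : ℕ} {G : SimpleGraph (Fin n)} {w : Fin n → ℝ} {k : ℕ}
    {Y : Matrix (Fin n) (Fin n) ℝ} (hY : Y.IsSymm) (hsupp : ∀ i j, ¬ G.Adj i j → Y i j = 0) :
    thetaInf G w k ≤ max (∑ i ∈ range k, eigDesc (sqrtRank1 w + Y) i) 0 := by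
  unfold thetaInf
  by_cases hbdd : BddBelow {r : ℝ | ∃ Y : Matrix (Fin n) (Fin n) ℝ, Y.IsSymm ∧
      (∀ i j, ¬ G.Adj i j → Y i j = 0) ∧ r = ∑ i ∈ range k, eigDesc (sqrtRank1 w + Y) i}
  · exact (csInf_le hbdd ⟨Y, hY, hsupp, rfl⟩).trans (le_max_left _ _)
  · exact (Real.sInf_of_not_bddBelow hbdd).trans_le (le_max_right _ _)

theorem sum_single_sub_eigenvalues_lt {n : ℕ} {Z : Matrix (Fin n) (Fin n) ℝ}
    (hZ : Z.IsHermitian) {k : ℕ}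
    (hviol : 0 < eigDesc Z 0 + ∑ i ∈ range (k - 1), eigDesc Z (n - 1 - i))
    {t : Fin n} (ht : hZ.eigenvalues t = eigDesc Z 0) {c : ℝ} (hc : ∑ a, |hZ.eigenvalues a| < c)
    {T : Finset (Fin n)} (hT : #T = k) :
    ∑ x ∈ T, (Pi.single t c - hZ.eigenvalues : Fin n → ℝ) x < c := by
  simp only [Pi.sub_apply, sum_sub_distrib, sum_pi_single']
  split_ifs with htT
  · have hbottom := sum_range_eigDesc_rev_le hZ (T.erase t)
    rw [card_erase_of_mem htT, hT] at hbottom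
    rw [← add_sum_erase T _ htT]
    linarith
  · have : -∑ x ∈ T, hZ.eigenvalues x ≤ ∑ a, |hZ.eigenvalues a| := by
      rw [← sum_neg_distrib]
      exact (sum_le_sum fun x _ => neg_le_abs _).trans
        (sum_le_sum_of_subset_of_nonneg (subset_univ T) fun _ _ _ => abs_nonneg _)
    linarith

theorem exists_weight_thetaInf_lt {n : ℕ} {G : SimpleGraph (Fin n)} {k : ℕ} (hk : 1 ≤ k)
    (hkn : k ≤ n) {Z : Matrix (Fin n) (Fin n) ℝ} (hZ : Z.IsSymm)
    (hsupp : ∀ i j, ¬ G.Adj i j → Z i j = 0)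
    (hviol : 0 < eigDesc Z 0 + ∑ i ∈ range (k - 1), eigDesc Z (n - 1 - i)) :
    ∃ w : Fin n → ℝ, (∀ i, 0 ≤ w i) ∧ thetaInf G w k < ∑ i, w i := by
  have hn : 0 < n := by omega
  have hZH := hZ.isHermitian
  obtain ⟨U, hUU, hZU⟩ := hZH.exists_orthogonal_eq_mul_diagonal_mul_transpose
  set t := Tuple.sort (fun j => -hZH.eigenvalues j) ⟨0, hn⟩
  set c := ∑ a, |hZH.eigenvalues a| + 1
  have hc : 0 < c := by positivity
  set D := diagonal (signVec (U · t))
  refine ⟨fun i => c * U i t ^ 2, fun i => by positivity, ?_⟩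
  have hw : ∑ i, c * U i t ^ 2 = c := by
    have hcol : ∑ i, U i t ^ 2 = 1 := by simpa [mul_apply, sq] using congrFun (congrFun hUU t) t
    rw [← mul_sum, hcol, mul_one]
  have hY : (-(D * Z * D)).IsSymm := by
    rw [IsSymm, transpose_neg, transpose_mul, transpose_mul, diagonal_transpose, hZ.eq, mul_assoc]
  have hYsupp : ∀ i j, ¬ G.Adj i j → (-(D * Z * D)) i j = 0 := by
    intro i j hij
    simp [D, mul_diagonal, diagonal_mul, hsupp i j hij]
  have hA : sqrtRank1 (fun i => c * U i t ^ 2) + -(D * Z * D)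
      = D * U * diagonal (Pi.single t c - hZH.eigenvalues) * (D * U)ᵀ := by
    simpa only [← hZU, sub_eq_add_neg] using
      sqrtRank1_sub_eq (U := U) (μ := hZH.eigenvalues) t hc.le
  have hAH : (sqrtRank1 (fun i => c * U i t ^ 2) + -(D * Z * D)).IsHermitian := by
    rw [hA, ← conjTranspose_eq_transpose_of_trivial]
    exact isHermitian_mul_mul_conjTranspose _ (isHermitian_diagonal _)
  have hWV : (D * U)ᵀ * (D * U) = 1 := by
    rw [transpose_mul, diagonal_transpose, mul_assoc, ← mul_assoc D, diagonal_mul_diagonal]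
    simp [signVec_mul_self, hUU]
  obtain ⟨T, hT, hsum⟩ :=
    exists_card_eq_sum_range_eigDesc_eq_of_eq_mul_diagonal_mul hAH hWV hA hkn
  have hlt := sum_single_sub_eigenvalues_lt hZH hviol (eigDesc_of_lt hZH hn).symm (lt_add_one _) hT
  rw [← hsum] at hlt
  rw [hw]
  exact (thetaInf_le_max hY hYsupp).trans_lt (max_lt hlt hc)

/-- Inequality (3) of Theorem `maxtheta`: if every nonnegative weight vector `w`
satisfies `ϑ_k(G; w) ≥ wᵀ𝟙`, then `h(G) ≤ k`. -/
theorem stmt15 {n : ℕ} (G : SimpleGraph (Fin n)) (k : ℕ) (hk : 1 ≤ k)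
    (h : ∀ w : Fin n → ℝ, (∀ i, 0 ≤ w i) → (∑ i, w i) ≤ thetaInf G w k) :
    hParam G ≤ k := by
  rcases le_or_gt k n with hkn | hnk
  · refine Nat.sInf_le ⟨hk, fun Z hZ hsupp => ?_⟩
    by_contra! hviol
    obtain ⟨w, hw, hlt⟩ := exists_weight_thetaInf_lt hk hkn hZ hsupp hviol
    exact (h w hw).not_gt hlt
  · exact (hParam_le_max_one G).trans (max_le hnk.le hk)
end

section
/- For any graph G, h(G) ≤ ⌈χ_f(G)⌉, where h(G) is the smallest integer m ≥ 1 such that for every symmetric matrix Z with Zᵢⱼ = 0 for all ij ∉ E(G), λ₁(Z) + λₙ(Z) + ⋯ + λ_{n−m+2}(Z) ≤ 0, and χ_f(G) is the fractional chromatic number. -/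
/-- The fractional chromatic number of `G`: the infimum of the total weight `𝟙ᵀy`
over nonnegative fractional colourings `y` indexed by independent sets. -/
noncomputable def fracChrom {n : ℕ} (G : SimpleGraph (Fin n)) : ℝ :=
  sInf {t : ℝ | ∃ y : Finset (Fin n) → ℝ, (∀ S, 0 ≤ y S) ∧
    (∀ S, y S ≠ 0 → ∀ u ∈ S, ∀ v ∈ S, ¬ G.Adj u v) ∧
    (∀ v, 1 ≤ ∑ S ∈ Finset.univ.filter (fun S => v ∈ S), y S) ∧
    t = ∑ S, y S}

open Finset Matrix

theorem sum_range_add_eq_add_sum_range_reflect {M : Type*} [AddCommMonoid M] (f : ℕ → M)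
    (k m : ℕ) :
    ∑ j ∈ range (k + m), f j = ∑ j ∈ range k, f j + ∑ i ∈ range m, f (k + m - 1 - i) := by
  rw [sum_range_add, ← sum_range_reflect (fun i => f (k + i)) m]
  congr 1
  exact sum_congr rfl fun i hi => by rw [mem_range] at hi; congr 1; omega

theorem top_add_sum_bottom_le_of_weights {n M : ℕ} (hM : 1 ≤ M) (hMn : M ≤ n) {μ d : ℕ → ℝ}
    (hμ : ∀ i j, i ≤ j → j < n → μ j ≤ μ i) (hμ_sum : ∑ j ∈ range n, μ j = 0)
    (hd : ∀ j < n, 0 ≤ d j ∧ d j ≤ 1) (hd_zero : d 0 = 1)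
    (hμd : ∑ j ∈ range n, μ j * d j = 0) {δ : ℝ} (hδ : 0 ≤ δ)
    (hd_sum : ∑ j ∈ range n, d j ≤ M + δ) :
    μ 0 + ∑ i ∈ range (M - 1), μ (n - 1 - i) ≤ |μ (n - M)| * δ := by
  obtain ⟨r, m, rfl, rfl⟩ : ∃ r m, n = r + 1 + m ∧ M = m + 1 :=
    ⟨n - M, M - 1, by omega, by omega⟩
  rw [show r + 1 + m - (m + 1) = r by omega, Nat.add_sub_cancel]
  have hsplit (f : ℕ → ℝ) : ∑ j ∈ range (r + 1 + m), f j
      = ∑ j ∈ range r, f (j + 1) + f 0 + ∑ i ∈ range m, f (r + 1 + m - 1 - i) := by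
    rw [sum_range_add_eq_add_sum_range_reflect, sum_range_succ']
  have hmiddle (j : ℕ) (hj : j ∈ range r) : μ r ≤ μ (j + 1) :=
    hμ _ _ (by simp at hj; omega) (by omega)
  have hbottom (i : ℕ) (hi : i ∈ range m) : μ (r + 1 + m - 1 - i) ≤ μ r :=
    hμ _ _ (by simp at hi; omega) (by omega)
  rw [hsplit] at hμ_sum hμd hd_sum
  rcases le_or_gt (μ r) 0 with hr | hr
  · -- Weighing `μ r ≤ μ j` (middle) by `d j` and `μ j ≤ μ r` (bottom) by `1 - d j`, and using
    -- `∑ μ d = 0`, gives `μ 0 + ∑ bottom ≤ μ r (M - ∑ d)`.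
    have hmiddle' : μ r * ∑ j ∈ range r, d (j + 1) ≤ ∑ j ∈ range r, μ (j + 1) * d (j + 1) := by
      rw [mul_sum]
      exact sum_le_sum fun j hj =>
        mul_le_mul_of_nonneg_right (hmiddle j hj) (hd _ (by simp at hj; omega)).1
    have hbottom' : ∑ i ∈ range m, μ (r + 1 + m - 1 - i) ≤ ∑ i ∈ range m,
        (μ (r + 1 + m - 1 - i) * d (r + 1 + m - 1 - i) + μ r * (1 - d (r + 1 + m - 1 - i))) := by
      refine sum_le_sum fun i hi => ?_
      have := mul_nonneg (sub_nonneg.2 (hbottom i hi)) (sub_nonneg.2 (hd (r + 1 + m - 1 - i) (by omega)).2)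
      linarith
    simp only [sum_add_distrib, ← mul_sum, mul_sub, sum_sub_distrib, sum_const, card_range,
      nsmul_eq_mul, mul_one] at hbottom'
    rw [hd_zero, mul_one] at hμd
    rw [hd_zero] at hd_sum
    push_cast at hd_sum
    rw [abs_of_nonpos hr]
    linarith [mul_le_mul_of_nonpos_left hd_sum hr]
  · have : 0 ≤ ∑ j ∈ range r, μ (j + 1) := sum_nonneg fun j hj => hr.le.trans (hmiddle j hj)
    linarith [mul_nonneg (abs_nonneg (μ r)) hδ]

theorem div_mul_le_mul_of_le_mul {y ν c g : ℝ} (hy : 0 ≤ y) (hν : 0 ≤ ν) (hg : 0 ≤ g)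
    (h : c ≤ ν * g) : y / ν * c ≤ y * g := by
  rcases hν.eq_or_lt with rfl | hν
  · simpa using mul_nonneg hy hg
  · calc y / ν * c ≤ y / ν * (ν * g) := by gcongr
      _ = y * g := by field_simp

theorem nonpos_of_forall_pos_le_mul {a : ℝ} (c : ℝ) (h : ∀ δ > 0, a ≤ c * δ) : a ≤ 0 := by
  have hc : Filter.Tendsto (fun δ => c * δ) (nhdsWithin 0 (Set.Ioi 0)) (nhds 0) := by
    simpa using ((continuous_const_mul c).tendsto 0).mono_left nhdsWithin_le_nhds
  exact ge_of_tendsto hc (eventually_nhdsWithin_of_forall h)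

theorem trace_mul_eq_zero_of_adj {V R : Type*} [Fintype V] [NonUnitalNonAssocSemiring R]
    {G : SimpleGraph V} {Z Ψ : Matrix V V R} (hZ : ∀ i j, ¬ G.Adj i j → Z i j = 0)
    (hΨ : ∀ i j, G.Adj i j → Ψ i j = 0) : (Z * Ψ).trace = 0 := by
  refine sum_eq_zero fun i _ => sum_eq_zero fun j _ => ?_
  dsimp only
  by_cases h : G.Adj i j
  · rw [hΨ j i h.symm, mul_zero]
  · rw [hZ i j h, zero_mul]

noncomputable section FractionalColouring

variable {V : Type*} [Fintype V]

theorem sum_ite_card_eq_one : ∑ S : Finset V, (if S.card = 1 then 1 else 0 : ℝ) = Fintype.card V := by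
  rw [sum_boole, ← powerset_univ, ← powersetCard_eq_filter, card_powersetCard, card_univ,
    Nat.choose_one_right]

variable [DecidableEq V]

def coverage (y : Finset V → ℝ) (a : V) : ℝ := ∑ S ∈ univ.filter (fun S => a ∈ S), y S

structure IsFractionalColouring (G : SimpleGraph V) (y : Finset V → ℝ) : Prop where
  nonneg : ∀ S, 0 ≤ y S
  not_adj : ∀ S, y S ≠ 0 → ∀ u ∈ S, ∀ v ∈ S, ¬ G.Adj u v
  one_le_coverage : ∀ v, 1 ≤ coverage y v

theorem sum_mul_sum_eq_sum_mul_coverage (y : Finset V → ℝ) (f : V → ℝ) :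
    ∑ S, y S * ∑ a ∈ S, f a = ∑ a, f a * coverage y a := by
  simp only [coverage, mul_sum]
  exact (sum_comm' (by simp)).trans
    (sum_congr rfl fun _ _ => sum_congr rfl fun _ _ => mul_comm _ _)

theorem IsFractionalColouring.one_le_sum [Nonempty V] {G : SimpleGraph V} {y : Finset V → ℝ}
    (hy : IsFractionalColouring G y) : 1 ≤ ∑ S, y S :=
  (hy.one_le_coverage (Classical.arbitrary V)).trans
    (sum_le_sum_of_subset_of_nonneg (filter_subset _ _) fun S _ _ => hy.nonneg S)

theorem isFractionalColouring_singletons (G : SimpleGraph V) :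
    IsFractionalColouring G (fun S => if S.card = 1 then 1 else 0) where
  nonneg S := by split_ifs <;> norm_num
  not_adj S hS u hu v hv := by
    obtain ⟨a, rfl⟩ := card_eq_one.1 (not_not.1 fun h => hS (if_neg h))
    rw [mem_singleton] at hu hv
    subst hu hv
    exact G.irrefl
  one_le_coverage v :=
    le_of_eq_of_le (by simp)
      (single_le_sum (f := fun S : Finset V => if S.card = 1 then (1 : ℝ) else 0)
        (fun S _ => by split_ifs <;> norm_num) (mem_filter.2 ⟨mem_univ _, mem_singleton_self v⟩))

def classVec (y : Finset V → ℝ) (x : V → ℝ) (S : Finset V) (a : V) : ℝ :=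
  if a ∈ S then x a / coverage y a else 0

-- Classes with `classVec y x S ⬝ᵥ x = 0` contribute nothing, through `y S / 0 = 0`.
def colouringMatrix (y : Finset V → ℝ) (x : V → ℝ) : Matrix V V ℝ :=
  ∑ S, (y S / (classVec y x S ⬝ᵥ x)) • vecMulVec (classVec y x S) (classVec y x S)

variable {y : Finset V → ℝ} {x : V → ℝ}

theorem classVec_dotProduct (S : Finset V) (v : V → ℝ) :
    classVec y x S ⬝ᵥ v = ∑ a ∈ S, x a / coverage y a * v a := by
  simp [dotProduct, classVec, ite_mul, sum_ite_mem]

theorem classVec_dotProduct_self (S : Finset V) :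
    classVec y x S ⬝ᵥ x = ∑ a ∈ S, x a ^ 2 / coverage y a := by
  rw [classVec_dotProduct]
  exact sum_congr rfl fun a _ => by ring

theorem dotProduct_colouringMatrix_mulVec (v : V → ℝ) :
    v ⬝ᵥ colouringMatrix y x *ᵥ v
      = ∑ S, y S / (classVec y x S ⬝ᵥ x) * (classVec y x S ⬝ᵥ v) ^ 2 := by
  simp [colouringMatrix, sum_mulVec, sum_dotProduct, smul_mulVec, vecMulVec_mulVec,
    smul_dotProduct, dotProduct_comm v, sq]

theorem trace_colouringMatrix : (colouringMatrix y x).trace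
    = ∑ S, y S / (classVec y x S ⬝ᵥ x) * (classVec y x S ⬝ᵥ classVec y x S) := by
  simp [colouringMatrix, trace_sum]

variable {G : SimpleGraph V} (hy : IsFractionalColouring G y)
include hy

theorem IsFractionalColouring.coverage_pos (a : V) : 0 < coverage y a :=
  one_pos.trans_le (hy.one_le_coverage a)

theorem IsFractionalColouring.classVec_dotProduct_self_nonneg (S : Finset V) :
    0 ≤ classVec y x S ⬝ᵥ x := by
  rw [classVec_dotProduct_self]
  exact sum_nonneg fun a _ => div_nonneg (sq_nonneg _) (hy.coverage_pos a).le

theorem IsFractionalColouring.colouringMatrix_apply_eq_zero {a b : V} (hab : G.Adj a b) :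
    colouringMatrix y x a b = 0 := by
  simp only [colouringMatrix, Matrix.sum_apply, Matrix.smul_apply, vecMulVec_apply, smul_eq_mul]
  refine sum_eq_zero fun S _ => ?_
  by_cases hS : y S = 0
  · simp [hS]
  by_cases ha : a ∈ S
  · by_cases hb : b ∈ S
    · exact absurd hab (hy.not_adj S hS a ha b hb)
    · simp [classVec, hb]
  · simp [classVec, ha]

theorem IsFractionalColouring.dotProduct_colouringMatrix_mulVec_nonneg (v : V → ℝ) :
    0 ≤ v ⬝ᵥ colouringMatrix y x *ᵥ v := by
  rw [dotProduct_colouringMatrix_mulVec]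
  exact sum_nonneg fun S _ =>
    mul_nonneg (div_nonneg (hy.nonneg S) (hy.classVec_dotProduct_self_nonneg S)) (sq_nonneg _)

theorem IsFractionalColouring.dotProduct_colouringMatrix_mulVec_le (v : V → ℝ) :
    v ⬝ᵥ colouringMatrix y x *ᵥ v ≤ v ⬝ᵥ v := by
  have hw := hy.coverage_pos
  have hCS (S : Finset V) : (classVec y x S ⬝ᵥ v) ^ 2
      ≤ (classVec y x S ⬝ᵥ x) * ∑ a ∈ S, v a ^ 2 / coverage y a := by
    rw [classVec_dotProduct_self, classVec_dotProduct]
    refine sum_sq_le_sum_mul_sum_of_sq_le_mul S (fun a _ => ?_) (fun a _ => ?_) fun a _ => ?_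
    · exact div_nonneg (sq_nonneg _) (hw a).le
    · exact div_nonneg (sq_nonneg _) (hw a).le
    · have := (hw a).ne'; field_simp; rfl
  calc v ⬝ᵥ colouringMatrix y x *ᵥ v ≤ ∑ S, y S * ∑ a ∈ S, v a ^ 2 / coverage y a := by
        rw [dotProduct_colouringMatrix_mulVec]
        exact sum_le_sum fun S _ => div_mul_le_mul_of_le_mul (hy.nonneg S)
          (hy.classVec_dotProduct_self_nonneg S)
          (sum_nonneg fun a _ => div_nonneg (sq_nonneg _) (hw a).le) (hCS S)
    _ = v ⬝ᵥ v := by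
        rw [sum_mul_sum_eq_sum_mul_coverage]
        exact sum_congr rfl fun a _ => by field_simp [(hw a).ne']

theorem IsFractionalColouring.dotProduct_colouringMatrix_mulVec_self (hx : x ⬝ᵥ x = 1) :
    x ⬝ᵥ colouringMatrix y x *ᵥ x = 1 := by
  have hw := hy.coverage_pos
  calc x ⬝ᵥ colouringMatrix y x *ᵥ x = ∑ S, y S * (classVec y x S ⬝ᵥ x) := by
        rw [dotProduct_colouringMatrix_mulVec]
        refine sum_congr rfl fun S _ => ?_
        rcases eq_or_ne (classVec y x S ⬝ᵥ x) 0 with h | h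
        · simp [h]
        · field_simp
    _ = x ⬝ᵥ x := by
        simp only [classVec_dotProduct_self, sum_mul_sum_eq_sum_mul_coverage]
        exact sum_congr rfl fun a _ => by field_simp [(hw a).ne']
    _ = 1 := hx

theorem IsFractionalColouring.trace_colouringMatrix_le :
    (colouringMatrix y x).trace ≤ ∑ S, y S := by
  rw [trace_colouringMatrix]
  refine sum_le_sum fun S _ => ?_
  have hle : classVec y x S ⬝ᵥ classVec y x S ≤ (classVec y x S ⬝ᵥ x) * 1 := by
    rw [classVec_dotProduct_self, classVec_dotProduct, mul_one]
    refine sum_le_sum fun a ha => ?_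
    rw [classVec, if_pos ha, ← mul_div_assoc, div_mul_eq_mul_div, ← sq]
    exact div_le_self (div_nonneg (sq_nonneg _) (hy.coverage_pos a).le) (hy.one_le_coverage a)
  simpa using div_mul_le_mul_of_le_mul (hy.nonneg S) (hy.classVec_dotProduct_self_nonneg S)
    zero_le_one hle

end FractionalColouring

section FractionalChromaticNumber

variable {n : ℕ} (G : SimpleGraph (Fin n))

theorem fracChrom_eq_sInf_image :
    fracChrom G = sInf ((fun y => ∑ S, y S) '' {y | IsFractionalColouring G y}) := by
  unfold fracChrom
  congr 1
  ext t
  constructor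
  · rintro ⟨y, h0, h1, h2, rfl⟩
    exact ⟨y, ⟨h0, h1, h2⟩, rfl⟩
  · rintro ⟨y, ⟨h0, h1, h2⟩, rfl⟩
    exact ⟨y, h0, h1, h2, rfl⟩

theorem bddBelow_sum_isFractionalColouring :
    BddBelow ((fun y => ∑ S, y S) '' {y | IsFractionalColouring G y}) :=
  ⟨0, Set.forall_mem_image.2 fun _ hy => sum_nonneg fun S _ => hy.nonneg S⟩

theorem nonempty_sum_isFractionalColouring :
    ((fun y => ∑ S, y S) '' {y | IsFractionalColouring G y}).Nonempty :=
  ⟨_, _, isFractionalColouring_singletons G, rfl⟩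

theorem fracChrom_le_card : fracChrom G ≤ n := by
  rw [fracChrom_eq_sInf_image]
  simpa [sum_ite_card_eq_one] using csInf_le (bddBelow_sum_isFractionalColouring G)
    ⟨_, isFractionalColouring_singletons G, rfl⟩

theorem one_le_fracChrom (hn : 0 < n) : 1 ≤ fracChrom G := by
  have : Nonempty (Fin n) := ⟨⟨0, hn⟩⟩
  rw [fracChrom_eq_sInf_image]
  exact le_csInf (nonempty_sum_isFractionalColouring G)
    (Set.forall_mem_image.2 fun _ hy => hy.one_le_sum)

theorem exists_isFractionalColouring_sum_lt {ε : ℝ} (hε : 0 < ε) :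
    ∃ y, IsFractionalColouring G y ∧ ∑ S, y S < fracChrom G + ε := by
  have hlt := lt_add_of_pos_right (fracChrom G) hε
  rw [fracChrom_eq_sInf_image] at hlt ⊢
  obtain ⟨_, ⟨y, hy, rfl⟩, hlt⟩ :=
    exists_lt_of_csInf_lt (nonempty_sum_isFractionalColouring G) hlt
  exact ⟨y, hy, hlt⟩

end FractionalChromaticNumber

noncomputable section Spectral

variable {n : ℕ}

def permSeq (σ : Equiv.Perm (Fin n)) (f : Fin n → ℝ) (k : ℕ) : ℝ :=
  if h : k < n then f (σ ⟨k, h⟩) else 0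

theorem sum_range_permSeq_mul (σ : Equiv.Perm (Fin n)) (f g : Fin n → ℝ) :
    ∑ k ∈ range n, permSeq σ f k * permSeq σ g k = ∑ i, f i * g i := by
  rw [← Fin.sum_univ_eq_sum_range (fun k => permSeq σ f k * permSeq σ g k)]
  simpa [permSeq] using Equiv.sum_comp σ (fun i => f i * g i)

theorem sum_range_permSeq (σ : Equiv.Perm (Fin n)) (f : Fin n → ℝ) :
    ∑ k ∈ range n, permSeq σ f k = ∑ i, f i := by
  rw [← Fin.sum_univ_eq_sum_range (permSeq σ f)]
  simpa [permSeq] using Equiv.sum_comp σ f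

variable {Z : Matrix (Fin n) (Fin n) ℝ} (hZ : Z.IsHermitian)

def eigenvaluesSortPerm : Equiv.Perm (Fin n) := Tuple.sort (fun j => -hZ.eigenvalues j)

def topEigenvector (hn : 0 < n) : Fin n → ℝ :=
  ⇑(hZ.eigenvectorBasis (eigenvaluesSortPerm hZ ⟨0, hn⟩))

include hZ in
theorem eigDesc_eq_permSeq : eigDesc Z = permSeq (eigenvaluesSortPerm hZ) hZ.eigenvalues := by
  ext k
  by_cases hk : k < n
  · rw [eigDesc, dif_pos ⟨hk, hZ⟩, permSeq, dif_pos hk]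
    rfl
  · rw [eigDesc, dif_neg (fun h => hk h.1), permSeq, dif_neg hk]

include hZ in
theorem eigDesc_anti {i j : ℕ} (hij : i ≤ j) (hj : j < n) : eigDesc Z j ≤ eigDesc Z i := by
  have := Tuple.monotone_sort (fun j => -hZ.eigenvalues j)
    (show (⟨i, by omega⟩ : Fin n) ≤ ⟨j, hj⟩ from hij)
  rw [eigDesc_eq_permSeq hZ, permSeq, permSeq, dif_pos hj, dif_pos (by omega)]
  exact neg_le_neg_iff.1 this

theorem dotProduct_eigenvectorBasis_self (i : Fin n) :
    ⇑(hZ.eigenvectorBasis i) ⬝ᵥ ⇑(hZ.eigenvectorBasis i) = 1 := by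
  have h := real_inner_self_eq_norm_sq (hZ.eigenvectorBasis i)
  rw [hZ.eigenvectorBasis.orthonormal.1 i, EuclideanSpace.inner_eq_star_dotProduct] at h
  simpa using h

theorem trace_eq_sum_eigenvectorBasis (A : Matrix (Fin n) (Fin n) ℝ) :
    A.trace = ∑ i, ⇑(hZ.eigenvectorBasis i) ⬝ᵥ A *ᵥ ⇑(hZ.eigenvectorBasis i) := by
  set U : Matrix (Fin n) (Fin n) ℝ := (hZ.eigenvectorUnitary : Matrix (Fin n) (Fin n) ℝ)
  have hU : U * star U = 1 := Unitary.mul_star_self_of_mem hZ.eigenvectorUnitary.2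
  calc A.trace = (star U * A * U).trace := by rw [trace_mul_cycle, hU, one_mul]
    _ = _ := by
        simp only [trace, Matrix.diag, mul_apply, dotProduct, mulVec, sum_mul, mul_sum, U,
          star_eq_conjTranspose, conjTranspose_apply, star_trivial,
          IsHermitian.eigenvectorUnitary_apply, mul_assoc]
        exact sum_congr rfl fun i _ => sum_comm

theorem trace_mul_eq_sum_eigenvalues_mul (Ψ : Matrix (Fin n) (Fin n) ℝ) :
    (Z * Ψ).trace = ∑ i, hZ.eigenvalues i *
      (⇑(hZ.eigenvectorBasis i) ⬝ᵥ Ψ *ᵥ ⇑(hZ.eigenvectorBasis i)) := by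
  rw [trace_eq_sum_eigenvectorBasis hZ]
  refine sum_congr rfl fun i _ => ?_
  rw [← mulVec_mulVec, dotProduct_mulVec, ← mulVec_transpose, (isHermitian_iff_isSymm.1 hZ).eq,
    hZ.mulVec_eigenvectorBasis, smul_dotProduct, smul_eq_mul]

theorem eigDesc_top_add_sum_bottom_le (hn : 0 < n) {M : ℕ} (hM : 1 ≤ M) (hMn : M ≤ n)
    (htr : Z.trace = 0) {Ψ : Matrix (Fin n) (Fin n) ℝ} (hΨ_nonneg : ∀ v, 0 ≤ v ⬝ᵥ Ψ *ᵥ v)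
    (hΨ_le : ∀ v, v ⬝ᵥ Ψ *ᵥ v ≤ v ⬝ᵥ v)
    (hΨ_top : topEigenvector hZ hn ⬝ᵥ Ψ *ᵥ topEigenvector hZ hn = 1)
    (hZΨ : (Z * Ψ).trace = 0) {δ : ℝ} (hδ : 0 ≤ δ) (hΨ_trace : Ψ.trace ≤ M + δ) :
    eigDesc Z 0 + ∑ i ∈ range (M - 1), eigDesc Z (n - 1 - i) ≤ |eigDesc Z (n - M)| * δ := by
  set σ := eigenvaluesSortPerm hZ
  set q : Fin n → ℝ := fun i => ⇑(hZ.eigenvectorBasis i) ⬝ᵥ Ψ *ᵥ ⇑(hZ.eigenvectorBasis i)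
  refine top_add_sum_bottom_le_of_weights hM hMn (fun i j => eigDesc_anti hZ) ?_
    (d := permSeq σ q) (fun k hk => ?_) ?_ ?_ hδ ?_
  · rw [eigDesc_eq_permSeq hZ, sum_range_permSeq, ← htr, hZ.trace_eq_sum_eigenvalues]
    simp
  · rw [permSeq, dif_pos hk]
    exact ⟨hΨ_nonneg _, (hΨ_le _).trans (dotProduct_eigenvectorBasis_self hZ _).le⟩
  · rw [permSeq, dif_pos hn]
    exact hΨ_top
  · rwa [eigDesc_eq_permSeq hZ, sum_range_permSeq_mul, ← trace_mul_eq_sum_eigenvalues_mul hZ]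
  · rwa [sum_range_permSeq, ← trace_eq_sum_eigenvectorBasis hZ]

end Spectral

theorem eigDesc_top_add_sum_bottom_le_of_isFractionalColouring {n M : ℕ} (hn : 0 < n)
    (hM : 1 ≤ M) (hMn : M ≤ n) {G : SimpleGraph (Fin n)} {Z : Matrix (Fin n) (Fin n) ℝ}
    (hZ : Z.IsHermitian) (hZG : ∀ i j, ¬ G.Adj i j → Z i j = 0) {y : Finset (Fin n) → ℝ}
    (hy : IsFractionalColouring G y) {δ : ℝ} (hδ : 0 ≤ δ) (hyM : ∑ S, y S ≤ M + δ) :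
    eigDesc Z 0 + ∑ i ∈ range (M - 1), eigDesc Z (n - 1 - i) ≤ |eigDesc Z (n - M)| * δ :=
  eigDesc_top_add_sum_bottom_le hZ hn hM hMn (sum_eq_zero fun i _ => hZG i i G.irrefl)
    hy.dotProduct_colouringMatrix_mulVec_nonneg hy.dotProduct_colouringMatrix_mulVec_le
    (hy.dotProduct_colouringMatrix_mulVec_self (dotProduct_eigenvectorBasis_self hZ _))
    (trace_mul_eq_zero_of_adj hZG fun _ _ => hy.colouringMatrix_apply_eq_zero) hδ
    (hy.trace_colouringMatrix_le.trans hyM)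

/-- Theorem 4 of the paper: `h(G) ≤ ⌈χ_f(G)⌉`. -/
theorem stmt16 {n : ℕ} (hn : 0 < n) (G : SimpleGraph (Fin n)) :
    (hParam G : ℤ) ≤ ⌈fracChrom G⌉ := by
  have hχ := one_le_fracChrom G hn
  set M := ⌈fracChrom G⌉₊
  have hM : 1 ≤ M := Nat.one_le_ceil_iff.2 (by linarith)
  have hMn : M ≤ n := Nat.ceil_le.2 (fracChrom_le_card G)
  rw [← Int.natCast_ceil_eq_ceil (by linarith), Nat.cast_le]
  refine Nat.sInf_le ⟨hM, fun Z hZs hZG =>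
    nonpos_of_forall_pos_le_mul |eigDesc Z (n - M)| fun δ hδ => ?_⟩
  obtain ⟨y, hy, hyδ⟩ := exists_isFractionalColouring_sum_lt G hδ
  exact eigDesc_top_add_sum_bottom_le_of_isFractionalColouring hn hM hMn
    (isHermitian_iff_isSymm.2 hZs) hZG hy hδ.le (hyδ.le.trans (add_le_add_left (Nat.le_ceil _) δ))
end
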